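/- For a lattice L ⊆ ℝⁿ, a fixed vector u ∈ ℝⁿ, ε ∈ (0,1), and real σ > 2·η_ε(L), we have Σ_{x ∈ L*} ρ_{1/σ}(x - u) < ρ_{1/σ}(u - κ(u)) + ε, where κ(u) is a closest vector to u in the dual lattice L*. -/

import Mathlib

open Real

noncomputable section

/-- The dual of a point set `L ⊆ ℝⁿ`:
`L* = {y : ∀ x ∈ L, ⟨y, x⟩ ∈ ℤ}`. -/
def dualLattice {n : ℕ} (L : Set (EuclideanSpace ℝ (Fin n))) :
    Set (EuclideanSpace ℝ (Fin n)) :=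
  {y | ∀ x ∈ L, ∃ k : ℤ, (inner ℝ y x : ℝ) = (k : ℝ)}

/-- The smoothing parameter `η_ε(L)`: the smallest `s > 0` such that
`ρ_{1/s}(L* \ {0}) = Σ_{x ∈ L*\{0}} exp(-π‖x‖²s²) ≤ ε`. -/
def smoothingEta {n : ℕ} (ε : ℝ) (L : Set (EuclideanSpace ℝ (Fin n))) : ℝ :=
  sInf {s : ℝ | 0 < s ∧
    ∑' x : {v : EuclideanSpace ℝ (Fin n) // v ∈ dualLattice L ∧ v ≠ 0},
      Real.exp (-π * ‖(x : EuclideanSpace ℝ (Fin n))‖ ^ 2 * s ^ 2) ≤ ε}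

end

/-! Split off the term `x = κ(u)`. Every other `x ∈ L*` satisfies `‖x - κ(u)‖ ≤ 2‖x - u‖`, so
the remaining sum is at most `ρ_{2/σ}(L* \ {0})`. Since `s ↦ ρ_{1/s}(L* \ {0})` is strictly
decreasing and tends to `0`, the condition `σ / 2 > η_ε(L)` makes this strictly less than `ε`.
All series converge because `L*` is the `ℤ`-span of the dual basis of `b`, a discrete subgroup,
on which `exp (-a‖x‖²) ≤ m! / (a‖x‖²)ᵐ` reduces Gaussian sums to the lattice `p`-series. -/

open Filter Topology

section Gaussian

variable {E : Type*} [NormedAddCommGroup E]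

/-- `ρ_{1/s}(Λ \ {0})`; thus `smoothingEta ε L = sInf {s | 0 < s ∧ gaussianTail L* s ≤ ε}`. -/
noncomputable def gaussianTail (Λ : Set E) (s : ℝ) : ℝ :=
  ∑' v : {v : E // v ∈ Λ ∧ v ≠ 0}, exp (-π * ‖(v : E)‖ ^ 2 * s ^ 2)

lemma exp_neg_mul_sq_le_zpow {a t : ℝ} (ha : 0 < a) (ht : 0 < t) (m : ℕ) :
    exp (-a * t ^ 2) ≤ m.factorial / a ^ m * t ^ (-(2 * m : ℤ)) := by
  have hpow := pow_div_factorial_le_exp (a * t ^ 2) (by positivity) m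
  calc exp (-a * t ^ 2) = (exp (a * t ^ 2))⁻¹ := by rw [neg_mul, exp_neg]
    _ ≤ ((a * t ^ 2) ^ m / m.factorial)⁻¹ := inv_anti₀ (by positivity) hpow
    _ = m.factorial / a ^ m * t ^ (-(2 * m : ℤ)) := by
      rw [zpow_neg, zpow_mul, zpow_natCast, zpow_ofNat]; field_simp; ring

lemma norm_sub_le_two_mul_norm_sub_of_le {x k u : E} (h : ‖k - u‖ ≤ ‖x - u‖) :
    ‖x - k‖ ≤ 2 * ‖x - u‖ := by
  calc ‖x - k‖ ≤ ‖x - u‖ + ‖u - k‖ := norm_sub_le_norm_sub_add_norm_sub x u k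
    _ ≤ 2 * ‖x - u‖ := by rw [norm_sub_rev u k]; linarith

lemma tsum_subtype_eq_add_tsum_diff_singleton {β α : Type*} [AddCommGroup α] [UniformSpace α]
    [IsUniformAddGroup α] [CompleteSpace α] [T2Space α] {f : β → α} {s : Set β} {b : β}
    (hb : b ∈ s) (hf : Summable fun x : s => f x) :
    ∑' x : s, f x = f b + ∑' x : ↑(s \ {b}), f x := by
  conv_lhs => rw [← Set.union_sdiff_cancel (Set.singleton_subset_iff.mpr hb)]
  rw [Summable.tsum_union_disjoint (f := f) Set.disjoint_sdiff_right .of_finite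
    (hf.comp_injective (Set.inclusion_injective Set.sdiff_subset)), tsum_singleton]

lemma tsum_diff_singleton_eq_gaussianTail {S : Type*} [SetLike S E] [AddSubgroupClass S E]
    (M : S) {k : E} (hk : k ∈ M) (s : ℝ) :
    ∑' x : ↑((M : Set E) \ {k}), exp (-π * ‖(x : E) - k‖ ^ 2 * s ^ 2) =
      gaussianTail (M : Set E) s := by
  let e : {v : E // v ∈ (M : Set E) ∧ v ≠ 0} ≃ ↑((M : Set E) \ {k}) :=
    (Equiv.addRight k).subtypeEquiv fun v => by simp [add_mem_cancel_right hk]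
  rw [gaussianTail, ← e.tsum_eq]
  simp [e]

variable [NormedSpace ℝ E] [FiniteDimensional ℝ E]

namespace ZLattice

variable (M : Submodule ℤ E) [DiscreteTopology M]

lemma summable_exp_neg_pi_mul_norm_sub_sq {s : ℝ} (hs : s ≠ 0) (c : E) :
    Summable fun z : M => exp (-π * ‖(z : E) - c‖ ^ 2 * s ^ 2) := by
  set m := Module.finrank ℤ M + 1
  refine .of_norm_bounded_eventually
    ((summable_norm_sub_zpow M (-(2 * m : ℤ)) (by omega) c).mul_left
      (m.factorial / (π * s ^ 2) ^ m)) ?_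
  have hc : {z : M | (z : E) = c}.Subsingleton := fun z hz w hw => Subtype.ext (hz.trans hw.symm)
  filter_upwards [hc.finite.compl_mem_cofinite] with z hz
  rw [norm_of_nonneg (exp_pos _).le,
    show -π * ‖(z : E) - c‖ ^ 2 * s ^ 2 = -(π * s ^ 2) * ‖(z : E) - c‖ ^ 2 by ring]
  exact exp_neg_mul_sq_le_zpow (mul_pos pi_pos (pow_two_pos_of_ne_zero hs))
    (norm_pos_iff.mpr (sub_ne_zero.mpr hz)) m

lemma summable_exp_neg_pi_mul_norm_sub_sq_of_subset {s : ℝ} (hs : s ≠ 0) (c : E) {Λ : Set E}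
    (hΛ : Λ ⊆ M) : Summable fun x : Λ => exp (-π * ‖(x : E) - c‖ ^ 2 * s ^ 2) :=
  (summable_exp_neg_pi_mul_norm_sub_sq M hs c).comp_injective
    (i := fun x : Λ => (⟨x, hΛ x.2⟩ : M)) fun _ _ h => Subtype.ext (Subtype.mk.inj h)

lemma summable_gaussianTail {s : ℝ} (hs : s ≠ 0) :
    Summable fun v : {v : E // v ∈ (M : Set E) ∧ v ≠ 0} => exp (-π * ‖(v : E)‖ ^ 2 * s ^ 2) := by
  refine (summable_exp_neg_pi_mul_norm_sub_sq_of_subset M hs 0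
    (Λ := {v | v ∈ (M : Set E) ∧ v ≠ 0}) fun _ hv => hv.1).congr fun v => ?_
  simp

lemma gaussianTail_lt_of_lt {s t ε : ℝ} (hs : 0 < s) (hst : s < t) (hε : 0 < ε)
    (hsε : gaussianTail (M : Set E) s ≤ ε) : gaussianTail (M : Set E) t < ε := by
  rcases isEmpty_or_nonempty {v : E // v ∈ (M : Set E) ∧ v ≠ 0} with _ | ⟨⟨v⟩⟩
  · simpa [gaussianTail] using hε
  refine lt_of_lt_of_le (Summable.tsum_lt_tsum (i := v) (fun w => ?_) ?_
    (summable_gaussianTail M (hs.trans hst).ne') (summable_gaussianTail M hs.ne')) hsε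
  · simp only [neg_mul]
    gcongr
  · have hv : 0 < ‖(v : E)‖ := norm_pos_iff.mpr v.2.2
    simp only [neg_mul]
    gcongr

lemma tendsto_gaussianTail_atTop : Tendsto (gaussianTail (M : Set E)) atTop (𝓝 0) := by
  rw [← tsum_zero]
  refine tendsto_tsum_of_dominated_convergence (summable_gaussianTail M one_ne_zero)
    (fun v => ?_) ?_
  · have hv : 0 < ‖(v : E)‖ := norm_pos_iff.mpr v.2.2
    exact tendsto_exp_atBot.comp <| (tendsto_pow_atTop two_ne_zero).const_mul_atTop_of_neg
      (mul_neg_of_neg_of_pos (neg_neg_of_pos pi_pos) (by positivity))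
  · filter_upwards [eventually_ge_atTop 1] with s hs v
    rw [norm_of_nonneg (exp_pos _).le]
    simp only [neg_mul]
    gcongr

lemma gaussianTail_lt_of_sInf_lt {ε t : ℝ} (hε : 0 < ε)
    (ht : sInf {s | 0 < s ∧ gaussianTail (M : Set E) s ≤ ε} < t) :
    gaussianTail (M : Set E) t < ε := by
  have hne : {s | 0 < s ∧ gaussianTail (M : Set E) s ≤ ε}.Nonempty :=
    ((eventually_gt_atTop 0).and
      ((tendsto_gaussianTail_atTop M).eventually (ge_mem_nhds hε))).exists
  obtain ⟨s, ⟨hs, hsε⟩, hst⟩ := (csInf_lt_iff ⟨0, fun s hs => hs.1.le⟩ hne).mp ht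
  exact gaussianTail_lt_of_lt M hs hst hε hsε

lemma tsum_exp_neg_pi_mul_norm_sub_sq_le {u k : E} (hk : k ∈ M)
    (hkc : ∀ y ∈ M, ‖k - u‖ ≤ ‖y - u‖) {σ : ℝ} (hσ : σ ≠ 0) :
    ∑' x : (M : Set E), exp (-π * ‖(x : E) - u‖ ^ 2 * σ ^ 2) ≤
      exp (-π * ‖k - u‖ ^ 2 * σ ^ 2) + gaussianTail (M : Set E) (σ / 2) := by
  have hsub : (M : Set E) \ {k} ⊆ M := Set.sdiff_subset
  rw [tsum_subtype_eq_add_tsum_diff_singleton (s := (M : Set E))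
    (f := fun x => exp (-π * ‖x - u‖ ^ 2 * σ ^ 2)) hk
    (summable_exp_neg_pi_mul_norm_sub_sq_of_subset M hσ u subset_rfl),
    ← tsum_diff_singleton_eq_gaussianTail M hk]
  refine add_le_add le_rfl (Summable.tsum_le_tsum (fun x => ?_)
    (summable_exp_neg_pi_mul_norm_sub_sq_of_subset M hσ u hsub)
    (summable_exp_neg_pi_mul_norm_sub_sq_of_subset M (div_ne_zero hσ two_ne_zero) k hsub))
  have hxk := norm_sub_le_two_mul_norm_sub_of_le (hkc x x.2.1)
  calc exp (-π * ‖(x : E) - u‖ ^ 2 * σ ^ 2) ≤ exp (-π * (‖(x : E) - k‖ / 2) ^ 2 * σ ^ 2) := by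
        simp only [neg_mul]
        gcongr
        linarith
    _ = exp (-π * ‖(x : E) - k‖ ^ 2 * (σ / 2) ^ 2) := by ring_nf

end ZLattice
end Gaussian

section

variable {F : Type*} [NormedAddCommGroup F] [InnerProductSpace ℝ F]

lemma innerₗ_nondegenerate : (innerₗ F).Nondegenerate :=
  (LinearMap.IsRefl.nondegenerate_iff_separatingLeft (isSymm_inner (E := F)).isRefl).mpr
    fun x hx => inner_self_eq_zero.mp (hx x)

end

lemma dualLattice_span_basis {n : ℕ} {ι : Type*} [Finite ι] [DecidableEq ι]
    (b : Module.Basis ι ℝ (EuclideanSpace ℝ (Fin n))) :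
    dualLattice (Submodule.span ℤ (Set.range b) : Set (EuclideanSpace ℝ (Fin n))) =
      Submodule.span ℤ
        (Set.range (LinearMap.BilinForm.dualBasis (innerₗ _) innerₗ_nondegenerate b)) := by
  ext x
  rw [SetLike.mem_coe, ← LinearMap.BilinForm.dualSubmodule_span_of_basis,
    LinearMap.BilinForm.mem_dualSubmodule]
  simp [dualLattice, Submodule.mem_one, eq_comm]

/-- For a (full-rank) lattice `L ⊆ ℝⁿ`, `u ∈ ℝⁿ`, `ε ∈ (0,1)` and `σ > 2·η_ε(L)`:
`Σ_{x ∈ L*} ρ_{1/σ}(x - u) < ρ_{1/σ}(u - κ(u)) + ε`, where `κ(u)` is a closest vector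
to `u` in `L*` and `ρ_{1/σ}(v) = exp(-π‖v‖²σ²)`. -/
theorem stmt_7 (n : ℕ) (L : Submodule ℤ (EuclideanSpace ℝ (Fin n)))
    (b : Module.Basis (Fin n) ℝ (EuclideanSpace ℝ (Fin n)))
    (hb : Submodule.span ℤ (Set.range ⇑b) = L)
    (u : EuclideanSpace ℝ (Fin n)) (ε σ : ℝ) (hε : ε ∈ Set.Ioo (0 : ℝ) 1)
    (hσ : 2 * smoothingEta ε (L : Set (EuclideanSpace ℝ (Fin n))) < σ)
    (k : EuclideanSpace ℝ (Fin n))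
    (hk : k ∈ dualLattice (L : Set (EuclideanSpace ℝ (Fin n))))
    (hkc : ∀ y ∈ dualLattice (L : Set (EuclideanSpace ℝ (Fin n))), ‖k - u‖ ≤ ‖y - u‖) :
    ∑' x : dualLattice (L : Set (EuclideanSpace ℝ (Fin n))),
        Real.exp (-π * ‖(x : EuclideanSpace ℝ (Fin n)) - u‖ ^ 2 * σ ^ 2) <
      Real.exp (-π * ‖u - k‖ ^ 2 * σ ^ 2) + ε := by
  set M := Submodule.span ℤ (Set.range (LinearMap.BilinForm.dualBasis _ innerₗ_nondegenerate b))
  have hdual : dualLattice (L : Set (EuclideanSpace ℝ (Fin n))) = M := by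
    rw [← hb, dualLattice_span_basis]
  change 2 * sInf {s | 0 < s ∧
    gaussianTail (dualLattice (L : Set (EuclideanSpace ℝ (Fin n)))) s ≤ ε} < σ at hσ
  rw [hdual] at hσ hk hkc ⊢
  have hσ0 : 0 < σ := lt_of_le_of_lt (mul_nonneg zero_le_two
    (Real.sInf_nonneg fun s hs => hs.1.le)) hσ
  calc _ ≤ exp (-π * ‖k - u‖ ^ 2 * σ ^ 2) + gaussianTail (M : Set _) (σ / 2) :=
        ZLattice.tsum_exp_neg_pi_mul_norm_sub_sq_le M hk hkc hσ0.ne'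
    _ < _ := by
      rw [norm_sub_rev k u]
      gcongr
      exact ZLattice.gaussianTail_lt_of_sInf_lt M (t := σ / 2) hε.1 (by linarith)
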